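/- Let T be a special coherent Aronszajn tree, let K ⊆ T, let n be a positive natural number, and let S ∈ 𝓡_n^⊥. Suppose {X_α : α ∈ ω₁} is a family of pairwise distinct elements of S. Then there exist α < β such that for all i < n, X_α(i) and X_β(i) are incomparable in T and X_α(i) ∧ X_β(i) ∈ K. -/

import Mathlib

noncomputable section

/-- The first uncountable ordinal. -/
def omega1 : Ordinal := (Cardinal.aleph 1).ord

/-- `f` codes an element of `2^{<ω₁}` (before requiring a countable domain):
a partial function from the ordinals to `Bool` whose domain is a proper
initial segment of the ordinals. -/
def IsISeq (f : Ordinal → Option Bool) : Prop :=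
  ∃ β : Ordinal, ∀ γ : Ordinal, (f γ).isSome ↔ γ < β

/-- Elements of the tree of binary sequences indexed by an initial segment of
the ordinals. -/
def BSeq := {f : Ordinal → Option Bool // IsISeq f}

/-- The domain (length, i.e. height in `2^{<ω₁}`) of a binary sequence. -/
def sdom (f : BSeq) : Ordinal := sInf {γ : Ordinal | f.1 γ = none}

/-- The tree order on binary sequences: extension. -/
def sle (f g : BSeq) : Prop := ∀ γ : Ordinal, f.1 γ ≠ none → g.1 γ = f.1 γ

/-- Two sequences are incomparable if neither extends the other. -/
def Incomp (f g : BSeq) : Prop := ¬ sle f g ∧ ¬ sle g f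

/-- The restriction `f↾β` of a sequence `f` to `β`. -/
def srestrict (f : BSeq) (β : Ordinal) : BSeq :=
  ⟨fun γ => if γ < β then f.1 γ else none, by
    obtain ⟨δ, hδ⟩ := f.2
    refine ⟨min β δ, fun γ => ?_⟩
    by_cases h : γ < β
    · simp [h, hδ γ, lt_min_iff]
    · simp [h, lt_min_iff]⟩

/-- `Δ(f,g)`: the least ordinal in the common domain at which `f` and `g` differ. -/
def sDelta (f g : BSeq) : Ordinal :=
  sInf {γ : Ordinal | (f.1 γ).isSome ∧ (g.1 γ).isSome ∧ f.1 γ ≠ g.1 γ}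

/-- The meet `f ∧ g = f↾Δ(f,g)` of two sequences. -/
def smeet (f g : BSeq) : BSeq := srestrict f (sDelta f g)

/-- `Δ(Z,t) = {Δ(s,t) : s ∈ Z incomparable with t}`. -/
def sDeltaSet (Z : Set BSeq) (t : BSeq) : Set Ordinal :=
  {γ | ∃ s ∈ Z, Incomp s t ∧ sDelta s t = γ}

/-- A downward-closed subset of `2^{<ω₁}`. -/
def DownClosed (T : Set BSeq) : Prop := ∀ s ∈ T, ∀ t : BSeq, sle t s → t ∈ T

/-- Coherence: any two members of `T` differ at only finitely many places of their
common domain. -/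
def Coherent (T : Set BSeq) : Prop :=
  ∀ s ∈ T, ∀ t ∈ T,
    {γ : Ordinal | (s.1 γ).isSome ∧ (t.1 γ).isSome ∧ s.1 γ ≠ t.1 γ}.Finite

/-- `T` is a special coherent Aronszajn tree: a downward-closed coherent subtree of
`2^{<ω₁}` of height ω₁ with countable levels, no uncountable chain, which is the
union of countably many antichains. -/
def SpecialCoherentAronszajn (T : Set BSeq) : Prop :=
  DownClosed T ∧ Coherent T ∧
  (∀ s ∈ T, sdom s < omega1) ∧
  (∀ β : Ordinal, β < omega1 → ∃ s ∈ T, sdom s = β) ∧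
  (∀ β : Ordinal, {s : BSeq | s ∈ T ∧ sdom s = β}.Countable) ∧
  (∀ c : Set BSeq, c ⊆ T → IsChain sle c → c.Countable) ∧
  (∃ A : ℕ → Set BSeq, (∀ n, IsAntichain sle (A n)) ∧ T ⊆ ⋃ n, A n)

/-- `X` is a member of the product tree `T^⊗n`: an `n`-tuple of members of `T`
all of the same height. -/
def TupleIn (T : Set BSeq) (n : ℕ) (X : Fin n → BSeq) : Prop :=
  (∀ i, X i ∈ T) ∧ ∀ i j, sdom (X i) = sdom (X j)

/-- `K(X)`: the set of `γ` below the height of `X` with `X(i)↾γ ∈ K` for all `i`. -/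
def KX (K : Set BSeq) {n : ℕ} (X : Fin n → BSeq) : Set Ordinal :=
  {γ | (∀ i, γ < sdom (X i)) ∧ ∀ i, srestrict (X i) γ ∈ K}

/-- `R^n_Z`: the set of `X ∈ T^⊗n` such that for some `t` in the downward closure of
`Z` of the same height as `X`, `Δ(Z,t) ∩ K(X) = ∅`. -/
def RnZ (K T : Set BSeq) (n : ℕ) (Z : Set BSeq) : Set (Fin n → BSeq) :=
  {X | TupleIn T n X ∧ ∃ t : BSeq, (∃ z ∈ Z, sle t z) ∧
        (∀ i, sdom t = sdom (X i)) ∧ sDeltaSet Z t ∩ KX K X = ∅}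

/-- A subtree of `T^⊗n`: an uncountable downward-closed subset of the product tree. -/
def IsProdSubtree (T : Set BSeq) (n : ℕ) (S : Set (Fin n → BSeq)) : Prop :=
  (∀ X ∈ S, TupleIn T n X) ∧ ¬S.Countable ∧
  ∀ X Y : Fin n → BSeq, TupleIn T n X → (∀ i, sle (X i) (Y i)) → Y ∈ S → X ∈ S

/-- `𝓡_n`: the set of subtrees of `T^⊗n` of the form `R^n_Z` for an uncountable
`Z ⊆ T`. -/
def Rfam (K T : Set BSeq) (n : ℕ) : Set (Set (Fin n → BSeq)) :=
  {R | IsProdSubtree T n R ∧ ∃ Z : Set BSeq, Z ⊆ T ∧ ¬Z.Countable ∧ R = RnZ K T n Z}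

/-- `𝓡_n^⊥`: the set of subtrees of `T^⊗n` almost disjoint from every member
of `𝓡_n`. -/
def RfamPerp (K T : Set BSeq) (n : ℕ) : Set (Set (Fin n → BSeq)) :=
  {S | IsProdSubtree T n S ∧ ∀ R ∈ Rfam K T n, (S ∩ R).Countable}

/-- Characterization of `sdom`. -/
lemma sdom_eq (f : BSeq) (β : Ordinal) (h : ∀ γ, (f.1 γ).isSome ↔ γ < β) :
    sdom f = β := by
  unfold sdom
  have hset : {γ : Ordinal | f.1 γ = none} = Set.Ici β := by
    ext γ
    simp only [Set.mem_setOf_eq, Set.mem_Ici, ← not_lt, ← h γ,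
      Option.isSome_iff_ne_none]
    tauto
  rw [hset, csInf_Ici]

lemma sdom_spec (f : BSeq) (γ : Ordinal) : (f.1 γ).isSome ↔ γ < sdom f := by
  obtain ⟨β, hβ⟩ := f.2
  rw [sdom_eq f β hβ]; exact hβ γ

lemma isSome_of_lt {f : BSeq} {γ : Ordinal} (h : γ < sdom f) : (f.1 γ).isSome :=
  (sdom_spec f γ).2 h

lemma apply_ne_none_of_lt {f : BSeq} {γ : Ordinal} (h : γ < sdom f) : f.1 γ ≠ none := by
  have := isSome_of_lt h
  simpa [Option.isSome_iff_ne_none] using this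

lemma apply_eq_none_of_le {f : BSeq} {γ : Ordinal} (h : sdom f ≤ γ) : f.1 γ = none := by
  by_contra hne
  have : (f.1 γ).isSome := Option.isSome_iff_ne_none.2 hne
  exact absurd ((sdom_spec f γ).1 this) (not_lt.2 h)

lemma sle_refl (f : BSeq) : sle f f := fun _ _ => rfl

lemma sle_trans {f g h : BSeq} (h1 : sle f g) (h2 : sle g h) : sle f h := by
  intro γ hγ
  rw [h2 γ (by rw [h1 γ hγ]; exact hγ), h1 γ hγ]

lemma sle.dom_le {f g : BSeq} (h : sle f g) : sdom f ≤ sdom g := by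
  by_contra hlt
  push_neg at hlt
  exact apply_ne_none_of_lt hlt (by
    rw [← h (sdom g) (apply_ne_none_of_lt hlt)]
    exact apply_eq_none_of_le le_rfl)

lemma sle.eq_of_lt {f g : BSeq} (h : sle f g) {γ : Ordinal} (hγ : γ < sdom f) :
    g.1 γ = f.1 γ := h γ (apply_ne_none_of_lt hγ)

lemma srestrict_apply (f : BSeq) (β γ : Ordinal) :
    (srestrict f β).1 γ = if γ < β then f.1 γ else none := rfl

lemma srestrict_apply_of_lt (f : BSeq) {β γ : Ordinal} (h : γ < β) :
    (srestrict f β).1 γ = f.1 γ := if_pos h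

lemma sdom_srestrict (f : BSeq) (β : Ordinal) :
    sdom (srestrict f β) = min β (sdom f) := by
  apply sdom_eq
  intro γ
  rw [srestrict_apply]
  by_cases h : γ < β
  · simp [h, sdom_spec f γ, lt_min_iff]
  · simp [h, lt_min_iff]

lemma sle_srestrict (f : BSeq) (β : Ordinal) : sle (srestrict f β) f := by
  intro γ hγ
  rw [srestrict_apply] at hγ ⊢
  by_cases h : γ < β
  · rw [if_pos h]
  · simp [h] at hγ

lemma srestrict_srestrict (f : BSeq) {ρ β : Ordinal} (h : ρ ≤ β) :
    srestrict (srestrict f β) ρ = srestrict f ρ := by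
  apply Subtype.ext
  funext γ
  simp only [srestrict_apply]
  by_cases hγ : γ < ρ
  · rw [if_pos hγ, if_pos hγ, if_pos (lt_of_lt_of_le hγ h)]
  · rw [if_neg hγ, if_neg hγ]

lemma srestrict_eq_self {f : BSeq} {β : Ordinal} (h : sdom f ≤ β) :
    srestrict f β = f := by
  apply Subtype.ext
  funext γ
  rw [srestrict_apply]
  by_cases hγ : γ < β
  · rw [if_pos hγ]
  · rw [if_neg hγ]
    exact (apply_eq_none_of_le (le_trans h (not_lt.1 hγ))).symm

lemma srestrict_congr {f g : BSeq} {β : Ordinal} (h : ∀ γ < β, f.1 γ = g.1 γ) :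
    srestrict f β = srestrict g β := by
  apply Subtype.ext
  funext γ
  simp only [srestrict_apply]
  by_cases hγ : γ < β
  · rw [if_pos hγ, if_pos hγ, h γ hγ]
  · rw [if_neg hγ, if_neg hγ]

/-- The set of places where `f` and `g` both are defined and differ. -/
def dset (f g : BSeq) : Set Ordinal :=
  {γ : Ordinal | (f.1 γ).isSome ∧ (g.1 γ).isSome ∧ f.1 γ ≠ g.1 γ}

lemma sDelta_def (f g : BSeq) : sDelta f g = sInf (dset f g) := rfl

lemma dset_comm (f g : BSeq) : dset f g = dset g f := by
  ext γ; constructor <;> exact fun ⟨h1, h2, h3⟩ => ⟨h2, h1, h3.symm⟩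

lemma incomp_of_mem_dset {f g : BSeq} {γ : Ordinal} (h : γ ∈ dset f g) :
    Incomp f g := by
  obtain ⟨h1, h2, h3⟩ := h
  constructor
  · intro hle
    exact h3 (hle γ (Option.isSome_iff_ne_none.1 h1)).symm
  · intro hle
    exact h3 (hle γ (Option.isSome_iff_ne_none.1 h2))

lemma dset_nonempty_of_incomp {f g : BSeq} (h : Incomp f g) :
    (dset f g).Nonempty := by
  have aux : ∀ f g : BSeq, sdom f ≤ sdom g → ¬ sle f g → (dset f g).Nonempty := by
    intro f g hle hnle
    rw [sle] at hnle
    push_neg at hnle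
    obtain ⟨γ, hγ1, hγ2⟩ := hnle
    have hlt : γ < sdom f := by
      by_contra hge
      exact hγ1 (apply_eq_none_of_le (not_lt.1 hge))
    exact ⟨γ, isSome_of_lt hlt, isSome_of_lt (lt_of_lt_of_le hlt hle),
      fun he => hγ2 he.symm⟩
  rcases le_total (sdom f) (sdom g) with hle | hle
  · exact aux f g hle h.1
  · rw [dset_comm]; exact aux g f hle h.2

lemma sDelta_mem {f g : BSeq} (h : Incomp f g) : sDelta f g ∈ dset f g :=
  csInf_mem (dset_nonempty_of_incomp h)

lemma sDelta_le {f g : BSeq} {γ : Ordinal} (h : γ ∈ dset f g) : sDelta f g ≤ γ :=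
  csInf_le' h

lemma sDelta_eq {f g : BSeq} {γ : Ordinal} (h : γ ∈ dset f g)
    (hmin : ∀ ξ ∈ dset f g, γ ≤ ξ) : sDelta f g = γ :=
  le_antisymm (csInf_le' h) (le_csInf ⟨γ, h⟩ hmin)

lemma sDelta_lt_sdom_left {f g : BSeq} (h : Incomp f g) : sDelta f g < sdom f :=
  (sdom_spec f _).1 (sDelta_mem h).1

lemma sDelta_lt_sdom_right {f g : BSeq} (h : Incomp f g) : sDelta f g < sdom g :=
  (sdom_spec g _).1 (sDelta_mem h).2.1

lemma eq_of_lt_sDelta {f g : BSeq} {ξ : Ordinal} (hf : ξ < sdom f) (hg : ξ < sdom g)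
    (h : ξ < sDelta f g) : f.1 ξ = g.1 ξ := by
  by_contra hne
  exact absurd (sDelta_le ⟨isSome_of_lt hf, isSome_of_lt hg, hne⟩) (not_le.2 h)

/-- Two defined values both different from a common defined value are equal. -/
lemma option_bool_eq {x y z : Option Bool} (hx : x.isSome) (hy : y.isSome)
    (hz : z.isSome) (h1 : x ≠ z) (h2 : y ≠ z) : x = y := by
  obtain ⟨a, rfl⟩ := Option.isSome_iff_exists.1 hx
  obtain ⟨b, rfl⟩ := Option.isSome_iff_exists.1 hy
  obtain ⟨c, rfl⟩ := Option.isSome_iff_exists.1 hz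
  cases a <;> cases b <;> cases c <;> simp_all

lemma omega1_isLimit : Order.IsSuccLimit omega1 :=
  Cardinal.isSuccLimit_ord (Cardinal.aleph0_le_aleph 1)

lemma succ_lt_omega1 {β : Ordinal} (h : β < omega1) : β + 1 < omega1 := by
  rw [Ordinal.add_one_eq_succ]
  exact omega1_isLimit.succ_lt h

universe u

lemma countable_Iio {β : Ordinal.{u}} (h : β < omega1) : (Set.Iio β).Countable := by
  rw [Cardinal.countable_iff_lt_aleph_one, Ordinal.mk_Iio_ordinal]
  have h1 : β.card < Cardinal.aleph 1 := Cardinal.lt_ord.1 h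
  have h2 : (Cardinal.aleph 1 : Cardinal.{u+1}) = Cardinal.lift.{u+1,u} (Cardinal.aleph (1 : Ordinal.{u})) := by
    rw [Cardinal.lift_aleph, Ordinal.lift_one]
  rw [h2]
  exact Cardinal.lift_lt.2 h1

lemma countable_Iic {β : Ordinal} (h : β < omega1) : (Set.Iic β).Countable := by
  have : Set.Iic β ⊆ Set.Iio (β + 1) := by
    intro γ hγ
    exact lt_of_le_of_lt hγ (lt_add_one β)
  exact (countable_Iio (succ_lt_omega1 h)).mono this

lemma not_countable_Iio_omega1 : ¬ (Set.Iio omega1.{u}).Countable := by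
  rw [Cardinal.countable_iff_lt_aleph_one, Ordinal.mk_Iio_ordinal]
  have h2 : (Cardinal.aleph 1 : Cardinal.{u+1}) = Cardinal.lift.{u+1,u} (Cardinal.aleph (1 : Ordinal.{u})) := by
    rw [Cardinal.lift_aleph, Ordinal.lift_one]
  rw [h2, Cardinal.lift_lt]
  unfold omega1
  rw [Cardinal.card_ord]
  exact lt_irrefl _

/-- Pigeonhole: an uncountable set mapped into a countable set has an
uncountable fiber. -/
lemma exists_uncountable_fiber {α β : Type*} {A : Set α} (hA : ¬ A.Countable)
    {C : Set β} (hC : C.Countable) (f : α → β) (hf : ∀ a ∈ A, f a ∈ C) :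
    ∃ c, ¬ {a | a ∈ A ∧ f a = c}.Countable := by
  by_contra h
  push_neg at h
  apply hA
  have hsub : A ⊆ ⋃ c ∈ C, {a | a ∈ A ∧ f a = c} := by
    intro a ha
    exact Set.mem_biUnion (hf a ha) ⟨ha, rfl⟩
  exact (hC.biUnion fun c _ => h c).mono hsub

lemma countable_of_injOn {α β : Type*} {A : Set α} {C : Set β} (f : α → β)
    (hmap : ∀ a ∈ A, f a ∈ C) (hinj : Set.InjOn f A) (hC : C.Countable) :
    A.Countable :=
  Set.MapsTo.countable_of_injOn hmap hinj hC

/-- A point-countable family of finite sets over an uncountable index set has an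
uncountable subfamily of pairwise disjoint sets. -/
lemma disjoint_subfamily {ι α : Type*} (A : Set ι) (hA : ¬ A.Countable)
    (D : ι → Set α)
    (hpt : ∀ ξ : α, {a | a ∈ A ∧ ξ ∈ D a}.Countable)
    (hfin : ∀ a ∈ A, (D a).Finite) :
    ∃ A' ⊆ A, ¬ A'.Countable ∧ ∀ a ∈ A', ∀ b ∈ A', a ≠ b → D a ∩ D b = ∅ := by
  have hzorn := zorn_subset
    {M : Set ι | M ⊆ A ∧ ∀ a ∈ M, ∀ b ∈ M, a ≠ b → D a ∩ D b = ∅} ?_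
  · obtain ⟨M, hM⟩ := hzorn
    refine ⟨M, hM.prop.1, ?_, hM.prop.2⟩
    intro hMc
    set bad := ⋃ ξ ∈ (⋃ a ∈ M, D a), {x | x ∈ A ∧ ξ ∈ D x} with hbad_def
    have hU : (⋃ a ∈ M, D a).Countable :=
      hMc.biUnion fun a ha => (hfin a (hM.prop.1 ha)).countable
    have hbad : bad.Countable := hU.biUnion fun ξ _ => hpt ξ
    have hne : (A \ (M ∪ bad)).Nonempty := by
      rw [Set.nonempty_iff_ne_empty]
      intro hemp
      apply hA
      have : A ⊆ M ∪ bad := by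
        intro a ha
        by_contra hmem
        exact Set.eq_empty_iff_forall_notMem.1 hemp a ⟨ha, hmem⟩
      exact (hMc.union hbad).mono this
    obtain ⟨a₀, ha₀A, ha₀⟩ := hne
    have hins : insert a₀ M ∈
        {M : Set ι | M ⊆ A ∧ ∀ a ∈ M, ∀ b ∈ M, a ≠ b → D a ∩ D b = ∅} := by
      constructor
      · exact Set.insert_subset ha₀A hM.prop.1
      · have key : ∀ b ∈ M, D a₀ ∩ D b = ∅ := by
          intro b hb
          rw [Set.eq_empty_iff_forall_notMem]
          rintro ξ ⟨hξa, hξb⟩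
          exact ha₀ (Set.mem_union_right _
            (Set.mem_biUnion (Set.mem_biUnion hb hξb) ⟨ha₀A, hξa⟩))
        rintro a (rfl | ha) b (rfl | hb) hab
        · exact absurd rfl hab
        · exact key b hb
        · rw [Set.inter_comm]; exact key a ha
        · exact hM.prop.2 a ha b hb hab
    have : insert a₀ M ⊆ M := hM.2 hins (Set.subset_insert a₀ M)
    exact ha₀ (Set.mem_union_left _ (this (Set.mem_insert a₀ M)))
  · intro c hc hchain
    refine ⟨⋃₀ c, ⟨?_, ?_⟩, fun s hs => Set.subset_sUnion_of_mem hs⟩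
    · exact Set.sUnion_subset fun M hM => (hc hM).1
    · rintro a ⟨M1, hM1, ha⟩ b ⟨M2, hM2, hb⟩ hab
      rcases hchain.total hM1 hM2 with h | h
      · exact (hc hM2).2 a (h ha) b hb hab
      · exact (hc hM1).2 a ha b (h hb) hab

lemma delta_system_lite {ι α : Type*} :
    ∀ (k : ℕ) (A : Set ι) (D : ι → Set α), ¬ A.Countable →
    (∀ a ∈ A, (D a).Finite ∧ (D a).ncard = k) →
    ∃ A' ⊆ A, ¬ A'.Countable ∧ ∃ R : Set α, R.Finite ∧
      ∀ a ∈ A', ∀ b ∈ A', a ≠ b → D a ∩ D b ⊆ R := by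
  intro k
  induction k with
  | zero =>
    intro A D hA h
    refine ⟨A, subset_rfl, hA, ∅, Set.finite_empty, ?_⟩
    intro a ha b hb hab
    have hDa : D a = ∅ := (Set.ncard_eq_zero (h a ha).1).1 (h a ha).2
    rw [hDa, Set.empty_inter]
  | succ k ih =>
    intro A D hA h
    by_cases hpt : ∀ ξ : α, {a | a ∈ A ∧ ξ ∈ D a}.Countable
    · obtain ⟨A', hsub, hunc, hdisj⟩ :=
        disjoint_subfamily A hA D hpt (fun a ha => (h a ha).1)
      exact ⟨A', hsub, hunc, ∅, Set.finite_empty,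
        fun a ha b hb hab => by rw [hdisj a ha b hb hab]⟩
    · push_neg at hpt
      obtain ⟨ξ, hξ⟩ := hpt
      have h1 : ∀ a ∈ {a | a ∈ A ∧ ξ ∈ D a}, (D a \ {ξ}).Finite ∧ (D a \ {ξ}).ncard = k := by
        intro a ha
        refine ⟨(h a ha.1).1.diff, ?_⟩
        rw [Set.ncard_diff_singleton_of_mem ha.2, (h a ha.1).2]
        rfl
      obtain ⟨A', hsub, hunc, R, hRfin, hR⟩ :=
        ih {a | a ∈ A ∧ ξ ∈ D a} (fun a => D a \ {ξ}) hξ h1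
      refine ⟨A', hsub.trans (fun a ha => ha.1), hunc, insert ξ R, hRfin.insert ξ, ?_⟩
      intro a ha b hb hab x hx
      by_cases hxξ : x = ξ
      · exact hxξ ▸ Set.mem_insert ξ R
      · exact Set.mem_insert_of_mem ξ
          (hR a ha b hb hab ⟨⟨hx.1, hxξ⟩, hx.2, hxξ⟩)

lemma delta_system {ι α : Type*} (A : Set ι) (hA : ¬ A.Countable) (D : ι → Set α)
    (hfin : ∀ a ∈ A, (D a).Finite) :
    ∃ A' ⊆ A, ¬ A'.Countable ∧ ∃ R : Set α, R.Finite ∧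
      ∀ a ∈ A', ∀ b ∈ A', a ≠ b → D a ∩ D b ⊆ R := by
  obtain ⟨k, hk⟩ := exists_uncountable_fiber hA
    (Set.countable_univ : (Set.univ : Set ℕ).Countable)
    (fun a => (D a).ncard) (fun a _ => Set.mem_univ _)
  obtain ⟨A', h1, h2, R, h3, h4⟩ := delta_system_lite k {a | a ∈ A ∧ (D a).ncard = k}
    D hk (fun a ha => ⟨hfin a ha.1, ha.2⟩)
  exact ⟨A', h1.trans (fun a ha => ha.1), h2, R, h3, h4⟩

lemma levels_le_countable {T : Set BSeq} (hT : SpecialCoherentAronszajn T)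
    {β : Ordinal} (hβ : β < omega1) : {s | s ∈ T ∧ sdom s ≤ β}.Countable := by
  have hsub : {s | s ∈ T ∧ sdom s ≤ β} ⊆ ⋃ γ ∈ Set.Iic β, {s | s ∈ T ∧ sdom s = γ} :=
    fun s hs => Set.mem_biUnion hs.2 ⟨hs.1, rfl⟩
  exact (((countable_Iic hβ).biUnion fun γ _ => hT.2.2.2.2.1 γ)).mono hsub

lemma tuples_countable {T : Set BSeq} (hT : SpecialCoherentAronszajn T)
    (n : ℕ) {β : Ordinal} (hβ : β < omega1) :
    {Y : Fin n → BSeq | (∀ i, Y i ∈ T) ∧ (∀ i, sdom (Y i) ≤ β)}.Countable := by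
  have hL := levels_le_countable hT hβ
  have hsub : {Y : Fin n → BSeq | (∀ i, Y i ∈ T) ∧ (∀ i, sdom (Y i) ≤ β)}
      ⊆ {Y : Fin n → BSeq | ∀ i, Y i ∈ {s | s ∈ T ∧ sdom s ≤ β}} :=
    fun Y hY i => ⟨hY.1 i, hY.2 i⟩
  exact (Set.countable_pi (fun _ => hL)).mono hsub

lemma rnz_downclosed {K T : Set BSeq} {n : ℕ} (hn : 0 < n) (Z : Set BSeq) :
    ∀ Xt Yt : Fin n → BSeq, TupleIn T n Xt → (∀ i, sle (Xt i) (Yt i)) →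
      Yt ∈ RnZ K T n Z → Xt ∈ RnZ K T n Z := by
  intro Xt Yt hTupX hle hY
  obtain ⟨hTupY, t, ⟨z, hz, htz⟩, hht, hempty⟩ := hY
  set i0 : Fin n := ⟨0, hn⟩
  set γX := sdom (Xt i0) with hγX
  have hdomX : ∀ i, sdom (Xt i) = γX := fun i => hTupX.2 i i0
  have hγle : γX ≤ sdom t := by
    rw [hht i0]; exact (hle i0).dom_le
  refine ⟨hTupX, srestrict t γX, ⟨z, hz, sle_trans (sle_srestrict t γX) htz⟩, ?_, ?_⟩
  · intro i
    rw [sdom_srestrict, hdomX i, min_eq_left hγle]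
  · rw [Set.eq_empty_iff_forall_notMem]
    rintro γ' ⟨⟨s, hs, hinc, hdel⟩, hKX⟩
    have hγ'lt : γ' < γX := by
      have h := sDelta_lt_sdom_right hinc
      rw [hdel, sdom_srestrict, min_eq_left hγle] at h
      exact h
    have htval : ∀ ξ ≤ γ', (srestrict t γX).1 ξ = t.1 ξ := fun ξ hξ =>
      srestrict_apply_of_lt t (lt_of_le_of_lt hξ hγ'lt)
    have hmem : γ' ∈ dset s t := by
      have h0 := sDelta_mem hinc
      rw [hdel] at h0
      obtain ⟨h1, h2, h3⟩ := h0
      rw [htval γ' le_rfl] at h2 h3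
      exact ⟨h1, h2, h3⟩
    have hmin : ∀ ξ ∈ dset s t, γ' ≤ ξ := by
      intro ξ hξ
      by_contra hlt
      push_neg at hlt
      have hmem2 : ξ ∈ dset s (srestrict t γX) := by
        obtain ⟨h1, h2, h3⟩ := hξ
        rw [← htval ξ (le_of_lt hlt)] at h2 h3
        exact ⟨h1, h2, h3⟩
      have := sDelta_le hmem2
      rw [hdel] at this
      exact absurd hlt (not_lt.2 this)
    have hKXY : γ' ∈ KX K Yt := by
      constructor
      · intro i
        have h1 : γ' < sdom (Xt i) := by rw [hdomX i]; exact hγ'lt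
        exact lt_of_lt_of_le h1 (hle i).dom_le
      · intro i
        have heq : srestrict (Yt i) γ' = srestrict (Xt i) γ' := by
          apply srestrict_congr
          intro ξ hξ
          exact (hle i).eq_of_lt (by rw [hdomX i]; exact lt_trans hξ hγ'lt)
        rw [heq]
        exact hKX.2 i
    rw [Set.eq_empty_iff_forall_notMem] at hempty
    exact hempty γ' ⟨⟨s, hs, incomp_of_mem_dset hmem, sDelta_eq hmem hmin⟩, hKXY⟩

/-- Let `T` be a special coherent Aronszajn tree, `K ⊆ T`, `n > 0`, and
`S ∈ 𝓡_n^⊥`.  If `{X_a : a ∈ ω₁}` is a family of pairwise distinct elements of `S`,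
then there are `a < b` such that for all `i < n`, `X_a(i)` and `X_b(i)` are
incomparable and `X_a(i) ∧ X_b(i) ∈ K`. -/
theorem stmt7 (T : Set BSeq) (hT : SpecialCoherentAronszajn T) (K : Set BSeq)
    (hK : K ⊆ T) (n : ℕ) (hn : 0 < n)
    (S : Set (Fin n → BSeq)) (hS : S ∈ RfamPerp K T n)
    (X : Ordinal → Fin n → BSeq)
    (hX : ∀ a < omega1, X a ∈ S)
    (hdist : ∀ a < omega1, ∀ b < omega1, a ≠ b → X a ≠ X b) :
    ∃ a < omega1, ∃ b < omega1, a < b ∧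
      ∀ i : Fin n, Incomp (X a i) (X b i) ∧ smeet (X a i) (X b i) ∈ K := by
  classical
  obtain ⟨hSsub, hSperp⟩ := hS
  obtain ⟨hSTup, hSunc, hSdc⟩ := hSsub
  set i0 : Fin n := ⟨0, hn⟩ with hi0
  have hTup : ∀ a ∈ Set.Iio omega1, TupleIn T n (X a) := fun a ha => hSTup _ (hX a ha)
  set δ : Ordinal → Ordinal := fun a => sdom (X a i0) with hδ
  have hdomi : ∀ a ∈ Set.Iio omega1, ∀ i, sdom (X a i) = δ a :=
    fun a ha i => (hTup a ha).2 i i0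
  have hmemT : ∀ a ∈ Set.Iio omega1, ∀ i, X a i ∈ T := fun a ha i => (hTup a ha).1 i
  have hδω : ∀ a ∈ Set.Iio omega1, δ a < omega1 := fun a ha => hT.2.2.1 _ (hmemT a ha i0)
  obtain ⟨Dn, hDndef⟩ : ∃ Dn : Ordinal → Fin n → Set Ordinal,
      ∀ a i, Dn a i = dset (X a i) (X a i0) := ⟨_, fun _ _ => rfl⟩
  obtain ⟨D, hDdef⟩ : ∃ D : Ordinal → Set Ordinal, ∀ a, D a = ⋃ i, Dn a i :=
    ⟨_, fun _ => rfl⟩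
  have hDfin : ∀ a ∈ Set.Iio omega1, (D a).Finite := by
    intro a ha
    rw [hDdef]
    refine Set.finite_iUnion fun i => ?_
    rw [hDndef]
    exact hT.2.1 _ (hmemT a ha i) _ (hmemT a ha i0)
  have hDlt : ∀ a ∈ Set.Iio omega1, ∀ ξ ∈ D a, ξ < δ a := by
    intro a ha ξ hξ
    rw [hDdef] at hξ
    obtain ⟨i, hi⟩ := Set.mem_iUnion.1 hξ
    rw [hDndef] at hi
    have := (sdom_spec (X a i) ξ).1 hi.1
    rwa [hdomi a ha i] at this
  -- Step 1: Δ-system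
  obtain ⟨A₁, hA₁sub, hA₁unc, R₀, hR₀fin, hR₀⟩ :=
    delta_system (Set.Iio omega1) not_countable_Iio_omega1 D hDfin
  set R := R₀ ∩ Set.Iio omega1 with hRdef
  have hRfin : R.Finite := hR₀fin.subset Set.inter_subset_left
  have hRω : ∀ ξ ∈ R, ξ < omega1 := fun ξ hξ => hξ.2
  have hRroot : ∀ a ∈ A₁, ∀ b ∈ A₁, a ≠ b → D a ∩ D b ⊆ R := by
    intro a ha b hb hab ξ hξ
    exact ⟨hR₀ a ha b hb hab hξ,
      lt_trans (hDlt a (hA₁sub ha) ξ hξ.1) (hδω a (hA₁sub ha))⟩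
  obtain ⟨ρ, hρω, hρR⟩ : ∃ ρ, ρ < omega1 ∧ ∀ ξ ∈ R, ξ < ρ := by
    by_cases hne : R.Nonempty
    · refine ⟨sSup R + 1, ?_, ?_⟩
      · exact succ_lt_omega1 (hRω _ (hne.csSup_mem hRfin))
      · intro ξ hξ
        exact lt_of_le_of_lt (le_csSup hRfin.bddAbove hξ) (lt_add_one _)
    · refine ⟨0, omega1_isLimit.pos, fun ξ hξ => absurd ⟨ξ, hξ⟩ hne⟩
  obtain ⟨E, hEdef⟩ : ∃ E : Ordinal → Set Ordinal, ∀ a, E a = D a \ R :=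
    ⟨_, fun _ => rfl⟩
  obtain ⟨ε, hεdef⟩ : ∃ ε : Ordinal → Ordinal,
      ∀ a, ε a = if h : (E a).Nonempty then sInf (E a) else δ a := ⟨_, fun _ => rfl⟩
  have hEdisj : ∀ a ∈ A₁, ∀ b ∈ A₁, a ≠ b → E a ∩ E b = ∅ := by
    intro a ha b hb hab
    rw [Set.eq_empty_iff_forall_notMem]
    rintro ξ ⟨hξa, hξb⟩
    rw [hEdef] at hξa hξb
    exact hξa.2 (hRroot a ha b hb hab ⟨hξa.1, hξb.1⟩)
  have hεle : ∀ a ∈ Set.Iio omega1, ε a ≤ δ a := by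
    intro a ha
    rw [hεdef]
    by_cases h : (E a).Nonempty
    · rw [dif_pos h]
      have hsub : E a ⊆ D a := by rw [hEdef]; exact Set.diff_subset
      exact le_of_lt (hDlt a ha _ (hsub (csInf_mem h)))
    · rw [dif_neg h]
  -- Step 2
  set A₂ := {a | a ∈ A₁ ∧ (∀ ξ ∈ E a, ¬ ξ < ρ) ∧ ρ < δ a} with hA₂def
  have hA₂unc : ¬ A₂.Countable := by
    intro hc
    apply hA₁unc
    have hc1 : {a | a ∈ A₁ ∧ ∃ ξ, ξ ∈ E a ∧ ξ < ρ}.Countable := by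
      refine countable_of_injOn
        (fun a => if h : ∃ ξ, ξ ∈ E a ∧ ξ < ρ then h.choose else 0)
        (fun a ha => ?_) (fun a ha b hb heq => ?_) (countable_Iio hρω)
      · simp only [dif_pos ha.2]
        exact ha.2.choose_spec.2
      · by_contra hab
        have h1 : (ha.2).choose ∈ E a := ha.2.choose_spec.1
        have h2 : (hb.2).choose ∈ E b := hb.2.choose_spec.1
        simp only [dif_pos ha.2, dif_pos hb.2] at heq
        rw [heq] at h1
        have := hEdisj a ha.1 b hb.1 hab
        rw [Set.eq_empty_iff_forall_notMem] at this
        exact this _ ⟨h1, h2⟩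
    have hc2 : {a | a ∈ A₁ ∧ δ a ≤ ρ}.Countable := by
      refine countable_of_injOn X (fun a ha => ?_) (fun a ha b hb heq => ?_)
        (tuples_countable hT n hρω)
      · refine ⟨fun i => hmemT a (hA₁sub ha.1) i, fun i => ?_⟩
        rw [hdomi a (hA₁sub ha.1) i]
        exact ha.2
      · by_contra hab
        exact hdist a (hA₁sub ha.1) b (hA₁sub hb.1) hab heq
    have hsplit : A₁ ⊆ A₂ ∪ ({a | a ∈ A₁ ∧ ∃ ξ, ξ ∈ E a ∧ ξ < ρ} ∪
        {a | a ∈ A₁ ∧ δ a ≤ ρ}) := by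
      intro a ha
      by_cases h1 : ∃ ξ, ξ ∈ E a ∧ ξ < ρ
      · exact Or.inr (Or.inl ⟨ha, h1⟩)
      · by_cases h2 : δ a ≤ ρ
        · exact Or.inr (Or.inr ⟨ha, h2⟩)
        · push_neg at h1 h2
          exact Or.inl ⟨ha, fun ξ hξ => not_lt.2 (h1 ξ hξ), h2⟩
    exact ((hc.union (hc1.union hc2)).mono hsplit)
  have hA₂ω : ∀ a ∈ A₂, a ∈ Set.Iio omega1 := fun a ha => hA₁sub ha.1
  have hρε : ∀ a ∈ A₂, ρ ≤ ε a := by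
    intro a ha
    rw [hεdef]
    by_cases h : (E a).Nonempty
    · rw [dif_pos h]
      exact not_lt.1 (ha.2.1 _ (csInf_mem h))
    · rw [dif_neg h]
      exact le_of_lt ha.2.2
  have hDlow : ∀ a ∈ A₂, ∀ ξ ∈ D a, ξ < ε a → ξ ∈ R := by
    intro a ha ξ hξD hξlt
    by_contra hξR
    have hξE : ξ ∈ E a := by rw [hEdef]; exact ⟨hξD, hξR⟩
    have hle : ε a ≤ ξ := by
      rw [hεdef, dif_pos ⟨ξ, hξE⟩]
      exact csInf_le' hξE
    exact absurd hξlt (not_lt.2 hle)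
  -- W
  obtain ⟨W, hWdef⟩ : ∃ W : Ordinal → Fin n → BSeq,
      ∀ a i, W a i = srestrict (X a i) (ε a) := ⟨_, fun _ _ => rfl⟩
  have hWdom : ∀ a ∈ Set.Iio omega1, ∀ i, sdom (W a i) = ε a := by
    intro a ha i
    rw [hWdef, sdom_srestrict, hdomi a ha i, min_eq_left (hεle a ha)]
  have hWsle : ∀ a i, sle (W a i) (X a i) := by
    intro a i; rw [hWdef]; exact sle_srestrict _ _
  have hWT : ∀ a ∈ Set.Iio omega1, ∀ i, W a i ∈ T :=
    fun a ha i => hT.1 _ (hmemT a ha i) _ (hWsle a i)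
  have hWTup : ∀ a ∈ Set.Iio omega1, TupleIn T n (W a) := fun a ha =>
    ⟨hWT a ha, fun i j => by rw [hWdom a ha i, hWdom a ha j]⟩
  have hWS : ∀ a ∈ Set.Iio omega1, W a ∈ S := fun a ha =>
    hSdc (W a) (X a) (hWTup a ha) (fun i => hWsle a i) (hX a ha)
  -- Step 3 pigeonholes
  obtain ⟨st, hstunc⟩ := exists_uncountable_fiber hA₂unc (levels_le_countable hT hρω)
    (fun a => srestrict (X a i0) ρ)
    (fun a ha => ⟨hT.1 _ (hmemT a (hA₂ω a ha) i0) _ (sle_srestrict _ _),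
      by rw [sdom_srestrict]; exact min_le_left _ _⟩)
  have htraceC : {g : Fin n → Set Ordinal | ∀ i, g i ∈ {t | t ⊆ R}}.Countable :=
    Set.countable_pi (fun _ => hRfin.finite_subsets.countable)
  obtain ⟨Rfn, hA₃unc⟩ := exists_uncountable_fiber hstunc htraceC
    (fun a => fun i => Dn a i ∩ R) (fun a _ i => Set.inter_subset_right)
  set A₃ := {a | a ∈ {a | a ∈ A₂ ∧ srestrict (X a i0) ρ = st} ∧
      (fun i => Dn a i ∩ R) = Rfn} with hA₃def
  have hA₃A₂ : ∀ a ∈ A₃, a ∈ A₂ := fun a ha => ha.1.1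
  have hA₃ω : ∀ a ∈ A₃, a ∈ Set.Iio omega1 := fun a ha => hA₂ω a (hA₃A₂ a ha)
  have hA₃st : ∀ a ∈ A₃, srestrict (X a i0) ρ = st := fun a ha => ha.1.2
  have hA₃tr : ∀ a ∈ A₃, ∀ i, Dn a i ∩ R = Rfn i := fun a ha i => congrFun ha.2 i
  -- key lemma
  have hkey : ∀ a ∈ A₃, ∀ i, ∀ ξ, ξ < ε a →
      ((X a i).1 ξ ≠ (X a i0).1 ξ ↔ ξ ∈ Rfn i) := by
    intro a ha i ξ hξ
    have haω := hA₃ω a ha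
    have hξδ : ξ < δ a := lt_of_lt_of_le hξ (hεle a haω)
    constructor
    · intro hne
      have hmem : ξ ∈ Dn a i := by
        rw [hDndef]
        exact ⟨isSome_of_lt (by rw [hdomi a haω i]; exact hξδ),
          isSome_of_lt (by rw [hdomi a haω i0]; exact hξδ), hne⟩
      have hmemD : ξ ∈ D a := by
        rw [hDdef]; exact Set.mem_iUnion.2 ⟨i, hmem⟩
      rw [← hA₃tr a ha i]
      exact ⟨hmem, hDlow a (hA₃A₂ a ha) ξ hmemD hξ⟩
    · intro hmem
      rw [← hA₃tr a ha i] at hmem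
      have := hmem.1
      rw [hDndef] at this
      exact this.2.2
  -- the family of restricted tuples and Z
  have hWfib : ∀ Y, {a | a ∈ A₃ ∧ W a = Y}.Countable := by
    intro Y
    have hsub1 : {a | a ∈ A₃ ∧ W a = Y ∧ (E a).Nonempty}.Subsingleton := by
      intro a ha b hb
      by_contra hab
      have hεa : ε a = sdom (Y i0) := by rw [← ha.2.1, hWdom a (hA₃ω a ha.1) i0]
      have hεb : ε b = sdom (Y i0) := by rw [← hb.2.1, hWdom b (hA₃ω b hb.1) i0]
      have h1 : ε a ∈ E a := by rw [hεdef, dif_pos ha.2.2]; exact csInf_mem ha.2.2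
      have h2 : ε b ∈ E b := by rw [hεdef, dif_pos hb.2.2]; exact csInf_mem hb.2.2
      have heq : ε a = ε b := by rw [hεa, hεb]
      have := hEdisj a (hA₃A₂ a ha.1).1 b (hA₃A₂ b hb.1).1 hab
      rw [Set.eq_empty_iff_forall_notMem] at this
      exact this (ε a) ⟨h1, heq ▸ h2⟩
    have hsub2 : {a | a ∈ A₃ ∧ W a = Y ∧ ¬ (E a).Nonempty}.Subsingleton := by
      intro a ha b hb
      by_contra hab
      have hXa : W a = X a := by
        funext i
        rw [hWdef, hεdef, dif_neg ha.2.2, srestrict_eq_self (le_of_eq (hdomi a (hA₃ω a ha.1) i))]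
      have hXb : W b = X b := by
        funext i
        rw [hWdef, hεdef, dif_neg hb.2.2, srestrict_eq_self (le_of_eq (hdomi b (hA₃ω b hb.1) i))]
      exact hdist a (hA₃ω a ha.1) b (hA₃ω b hb.1) hab (by rw [← hXa, ← hXb, ha.2.1, hb.2.1])
    have hsplit : {a | a ∈ A₃ ∧ W a = Y} ⊆
        {a | a ∈ A₃ ∧ W a = Y ∧ (E a).Nonempty} ∪
        {a | a ∈ A₃ ∧ W a = Y ∧ ¬ (E a).Nonempty} := by
      intro a ha
      by_cases h : (E a).Nonempty
      · exact Or.inl ⟨ha.1, ha.2, h⟩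
      · exact Or.inr ⟨ha.1, ha.2, h⟩
    exact ((hsub1.countable).union (hsub2.countable)).mono hsplit
  have hWfamUnc : ¬ (W '' A₃).Countable := by
    intro hc
    apply hA₃unc
    have hsub : A₃ ⊆ ⋃ Y ∈ W '' A₃, {a | a ∈ A₃ ∧ W a = Y} :=
      fun a ha => Set.mem_biUnion (Set.mem_image_of_mem W ha) ⟨ha, rfl⟩
    exact ((hc.biUnion fun Y _ => hWfib Y).mono hsub)
  set Z := (fun Y : Fin n → BSeq => Y i0) '' (W '' A₃) with hZdef
  have hZT : Z ⊆ T := by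
    rintro z ⟨Y, ⟨a, ha, rfl⟩, rfl⟩
    exact hWT a (hA₃ω a ha) i0
  have hZunc : ¬ Z.Countable := by
    intro hc
    apply hWfamUnc
    have hsplit : W '' A₃ ⊆ ⋃ z ∈ Z, {Y | Y ∈ W '' A₃ ∧ Y i0 = z} :=
      fun Y hY => Set.mem_biUnion (Set.mem_image_of_mem _ hY) ⟨hY, rfl⟩
    refine ((hc.biUnion ?_).mono hsplit)
    intro z hz
    obtain ⟨Y₀, hY₀, rfl⟩ := hz
    obtain ⟨a₀, ha₀, rfl⟩ := hY₀
    have hβ : sdom (W a₀ i0) < omega1 := hT.2.2.1 _ (hWT a₀ (hA₃ω a₀ ha₀) i0)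
    refine ((tuples_countable hT n hβ).mono ?_)
    rintro Y ⟨⟨a, ha, rfl⟩, hYz⟩
    refine ⟨fun i => hWT a (hA₃ω a ha) i, fun i => ?_⟩
    rw [hWdom a (hA₃ω a ha) i, ← hWdom a (hA₃ω a ha) i0, hYz]
  -- almost disjointness
  have hWRnZ : ((W '' A₃) ∩ RnZ K T n Z).Countable := by
    by_contra hunc
    have hRfamMem : RnZ K T n Z ∈ Rfam K T n := by
      refine ⟨⟨fun Xt hXt => hXt.1, ?_, rnz_downclosed hn Z⟩, Z, hZT, hZunc, rfl⟩
      intro hc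
      exact hunc (hc.mono Set.inter_subset_right)
    exact hunc ((hSperp _ hRfamMem).mono
      (Set.inter_subset_inter_left _ (fun Y hY => by
        obtain ⟨a, ha, rfl⟩ := hY
        exact hWS a (hA₃ω a ha))))
  have hex : ((W '' A₃) \ RnZ K T n Z).Nonempty := by
    rw [Set.nonempty_iff_ne_empty]
    intro hemp
    apply hWfamUnc
    refine hWRnZ.mono ?_
    intro Y hY
    by_cases h : Y ∈ RnZ K T n Z
    · exact ⟨hY, h⟩
    · exact absurd (Set.mem_diff_of_mem hY h) (by rw [hemp]; exact Set.notMem_empty Y)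
  obtain ⟨Ya, hYaW, hYaR⟩ := hex
  obtain ⟨a, haA₃, rfl⟩ := hYaW
  have haω : a ∈ Set.Iio omega1 := hA₃ω a haA₃
  have hfail : sDeltaSet Z (W a i0) ∩ KX K (W a) ≠ ∅ := by
    intro hemp
    exact hYaR ⟨hWTup a haω, W a i0,
      ⟨W a i0, Set.mem_image_of_mem _ (Set.mem_image_of_mem W haA₃), sle_refl _⟩,
      (fun i => by rw [hWdom a haω i, hWdom a haω i0]), hemp⟩
  obtain ⟨γ, hγmem⟩ := Set.nonempty_iff_ne_empty.2 hfail
  obtain ⟨hγdel, hγKX⟩ := hγmem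
  obtain ⟨s, hsZ, hsinc, hsdel⟩ := hγdel
  obtain ⟨Yb, hYbW, rfl⟩ := hsZ
  obtain ⟨b, hbA₃, rfl⟩ := hYbW
  have hbω : b ∈ Set.Iio omega1 := hA₃ω b hbA₃
  have hba : b ≠ a := by
    rintro rfl
    exact hsinc.1 (sle_refl _)
  -- basic facts about γ
  have hγεa : γ < ε a := by
    have := hγKX.1 i0
    rwa [hWdom a haω i0] at this
  have hγεb : γ < ε b := by
    have h := sDelta_lt_sdom_left hsinc
    rw [hsdel] at h
    rwa [hWdom b hbω i0] at h
  have hγδa : γ < δ a := lt_of_lt_of_le hγεa (hεle a haω)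
  have hγδb : γ < δ b := lt_of_lt_of_le hγεb (hεle b hbω)
  have hWvala : ∀ i, ∀ ξ, ξ < ε a → (W a i).1 ξ = (X a i).1 ξ := by
    intro i ξ hξ; rw [hWdef]; exact srestrict_apply_of_lt _ hξ
  have hWvalb : ∀ i, ∀ ξ, ξ < ε b → (W b i).1 ξ = (X b i).1 ξ := by
    intro i ξ hξ; rw [hWdef]; exact srestrict_apply_of_lt _ hξ
  -- ρ ≤ γ
  have hργ : ρ ≤ γ := by
    by_contra hlt
    push_neg at hlt
    have hmem := sDelta_mem hsinc
    rw [hsdel] at hmem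
    apply hmem.2.2
    have hsta : (X a i0).1 γ = st.1 γ := by
      rw [← hA₃st a haA₃, srestrict_apply_of_lt _ hlt]
    have hstb : (X b i0).1 γ = st.1 γ := by
      rw [← hA₃st b hbA₃, srestrict_apply_of_lt _ hlt]
    rw [hWvala i0 γ hγεa, hWvalb i0 γ hγεb, hsta, hstb]
  -- agreement below γ at coordinate i0
  have hi0eq : ∀ ξ, ξ < γ → (X a i0).1 ξ = (X b i0).1 ξ := by
    intro ξ hξ
    have h1 : (W b i0).1 ξ = (W a i0).1 ξ :=
      eq_of_lt_sDelta (by rw [hWdom b hbω i0]; exact lt_trans hξ hγεb)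
        (by rw [hWdom a haω i0]; exact lt_trans hξ hγεa)
        (by rw [hsdel]; exact hξ)
    rw [← hWvala i0 ξ (lt_trans hξ hγεa), ← h1, hWvalb i0 ξ (lt_trans hξ hγεb)]
  have hi0γ : (X b i0).1 γ ≠ (X a i0).1 γ := by
    have hmem := sDelta_mem hsinc
    rw [hsdel] at hmem
    have h3 := hmem.2.2
    rwa [hWvala i0 γ hγεa, hWvalb i0 γ hγεb] at h3
  -- main per-coordinate computation
  have hmain : ∀ i : Fin n, γ ∈ dset (X a i) (X b i) ∧
      (∀ ξ ∈ dset (X a i) (X b i), γ ≤ ξ) ∧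
      srestrict (X a i) γ ∈ K ∧ srestrict (X a i) γ = srestrict (X b i) γ := by
    intro i
    have hsomea : ∀ ξ, ξ ≤ γ → ((X a i).1 ξ).isSome :=
      fun ξ hξ => isSome_of_lt (by rw [hdomi a haω i]; exact lt_of_le_of_lt hξ hγδa)
    have hsomeb : ∀ ξ, ξ ≤ γ → ((X b i).1 ξ).isSome :=
      fun ξ hξ => isSome_of_lt (by rw [hdomi b hbω i]; exact lt_of_le_of_lt hξ hγδb)
    have hsomea0 : ∀ ξ, ξ ≤ γ → ((X a i0).1 ξ).isSome :=
      fun ξ hξ => isSome_of_lt (by rw [hdomi a haω i0]; exact lt_of_le_of_lt hξ hγδa)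
    have hsomeb0 : ∀ ξ, ξ ≤ γ → ((X b i0).1 ξ).isSome :=
      fun ξ hξ => isSome_of_lt (by rw [hdomi b hbω i0]; exact lt_of_le_of_lt hξ hγδb)
    have heqlt : ∀ ξ, ξ < γ → (X a i).1 ξ = (X b i).1 ξ := by
      intro ξ hξ
      by_cases hmem : ξ ∈ Rfn i
      · have hha := (hkey a haA₃ i ξ (lt_trans hξ hγεa)).2 hmem
        have hhb := (hkey b hbA₃ i ξ (lt_trans hξ hγεb)).2 hmem
        rw [← hi0eq ξ hξ] at hhb
        exact option_bool_eq (hsomea ξ (le_of_lt hξ)) (hsomeb ξ (le_of_lt hξ))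
          (hsomea0 ξ (le_of_lt hξ)) hha hhb
      · have h1 : (X a i).1 ξ = (X a i0).1 ξ :=
          not_ne_iff.1 (fun h => hmem ((hkey a haA₃ i ξ (lt_trans hξ hγεa)).1 h))
        have h2 : (X b i).1 ξ = (X b i0).1 ξ :=
          not_ne_iff.1 (fun h => hmem ((hkey b hbA₃ i ξ (lt_trans hξ hγεb)).1 h))
        rw [h1, h2, hi0eq ξ hξ]
    have hγRfn : γ ∉ Rfn i := by
      intro hmem
      rw [← hA₃tr a haA₃ i] at hmem
      exact absurd (hρR γ hmem.2) (not_lt.2 hργ)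
    have hneγ : (X a i).1 γ ≠ (X b i).1 γ := by
      have h1 : (X a i).1 γ = (X a i0).1 γ :=
        not_ne_iff.1 (fun h => hγRfn ((hkey a haA₃ i γ hγεa).1 h))
      have h2 : (X b i).1 γ = (X b i0).1 γ :=
        not_ne_iff.1 (fun h => hγRfn ((hkey b hbA₃ i γ hγεb).1 h))
      rw [h1, h2]
      exact fun h => hi0γ h.symm
    refine ⟨⟨hsomea γ le_rfl, hsomeb γ le_rfl, hneγ⟩, ?_, ?_, ?_⟩
    · intro ξ hξ
      by_contra hlt
      push_neg at hlt
      exact hξ.2.2 (heqlt ξ hlt)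
    · have hk := hγKX.2 i
      have heq : srestrict (W a i) γ = srestrict (X a i) γ := by
        rw [hWdef]
        exact srestrict_srestrict _ (le_of_lt hγεa)
      rwa [heq] at hk
    · exact srestrict_congr heqlt
  -- conclude
  rcases lt_or_gt_of_ne hba with hlt | hlt
  · refine ⟨b, hbω, a, haω, hlt, fun i => ?_⟩
    obtain ⟨hmem, hmin, hKmem, hKeq⟩ := hmain i
    have hmem' : γ ∈ dset (X b i) (X a i) := by rw [dset_comm]; exact hmem
    have hmin' : ∀ ξ ∈ dset (X b i) (X a i), γ ≤ ξ := by
      intro ξ hξ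
      rw [dset_comm] at hξ
      exact hmin ξ hξ
    refine ⟨incomp_of_mem_dset hmem', ?_⟩
    have : smeet (X b i) (X a i) = srestrict (X b i) γ := by
      unfold smeet
      rw [sDelta_eq hmem' hmin']
    rw [this, ← hKeq]
    exact hKmem
  · refine ⟨a, haω, b, hbω, hlt, fun i => ?_⟩
    obtain ⟨hmem, hmin, hKmem, hKeq⟩ := hmain i
    refine ⟨incomp_of_mem_dset hmem, ?_⟩
    have : smeet (X a i) (X b i) = srestrict (X a i) γ := by
      unfold smeet
      rw [sDelta_eq hmem hmin]
    rw [this]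
    exact hKmem

end
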